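/- Let v : ℝ × ℝ³ → ℝ³ and J : ℝ × ℝ³ → ℝ³ be smooth (C²) vector fields satisfying ∂t J_k + ∂_k(v_m J_m) + v_m(∂_m J_k − ∂_k J_m) = 0 for all k. Define the involution tensor I_{mk} = ∂_m J_k − ∂_k J_m (i.e., the curl of J). If at some time t the field J(t, ·) is curl-free, i.e., I_{mk}(t, x) = 0 for all m, k, x, then ∂t I_{mk}(t, x) = 0 for all m, k, x at that time. -/

import Mathlib

/-- Time partial derivative of a spacetime scalar field. -/
noncomputable def pt (f : ℝ × (Fin 3 → ℝ) → ℝ) (x : ℝ × (Fin 3 → ℝ)) : ℝ :=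
  fderiv ℝ f x (1, 0)

/-- Spatial partial derivative in the i-th direction of a spacetime scalar field. -/
noncomputable def ps (i : Fin 3) (f : ℝ × (Fin 3 → ℝ) → ℝ) (x : ℝ × (Fin 3 → ℝ)) : ℝ :=
  fderiv ℝ f x (0, Pi.single i 1)

/-- Involution tensor I_{mk} = ∂_m J_k - ∂_k J_m. -/
noncomputable def Invol (J : ℝ × (Fin 3 → ℝ) → Fin 3 → ℝ) (m k : Fin 3)
    (x : ℝ × (Fin 3 → ℝ)) : ℝ :=
  ps m (fun y => J y k) x - ps k (fun y => J y m) x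

/-!
Apply `∂_m` to the equation for `J_k`, `∂_k` to the one for `J_m`, and subtract. Since `∂_t`
commutes with spatial derivatives, the left side is `∂_t I_{mk}`; the gradient term
`∂_m ∂_k (v·J) - ∂_k ∂_m (v·J)` cancels by symmetry of second derivatives; and the transport
term `v_n I_{nk}` vanishes identically on the slice `{t} × ℝ³`, so its spatial derivatives vanish
there as well.
-/

section Directional

variable {𝕜 : Type*} [RCLike 𝕜] {E F G : Type*}
  [NormedAddCommGroup E] [NormedSpace 𝕜 E] [NormedAddCommGroup F] [NormedSpace 𝕜 F]
  [NormedAddCommGroup G] [NormedSpace 𝕜 G]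

theorem differentiable_fderiv_apply {f : E → F} (hf : ContDiff 𝕜 2 f) (u : E) :
    Differentiable 𝕜 (fun y => fderiv 𝕜 f y u) :=
  ((hf.fderiv_right one_add_one_eq_two.le).clm_apply contDiff_const).differentiable one_ne_zero

theorem fderiv_fderiv_apply_comm {f : E → F} {x : E} (hf : ContDiffAt 𝕜 2 f x) (u w : E) :
    fderiv 𝕜 (fun y => fderiv 𝕜 f y u) x w = fderiv 𝕜 (fun y => fderiv 𝕜 f y w) x u := by
  -- The Lie bracket of two constant vector fields vanishes.
  have h := VectorField.fderiv_apply_lieBracket (V := fun _ => w) (W := fun _ => u) hf (by simp)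
    (differentiableAt_const u) (differentiableAt_const w)
  simpa [VectorField.lieBracket, sub_eq_zero] using h.symm

theorem fderiv_apply_inr_eq_zero_of_forall_eq_zero {g : E × F → G} {t : E} {x : F}
    (hg : DifferentiableAt 𝕜 g (t, x)) (h0 : ∀ y, g (t, y) = 0) (e : F) :
    fderiv 𝕜 g (t, x) (0, e) = 0 := by
  have hslice := hg.hasFDerivAt.comp x (hasFDerivAt_prodMk_right (𝕜 := 𝕜) t x)
  have hzero : g ∘ Prod.mk t = 0 := funext h0
  rw [hzero] at hslice
  simpa using congrArg (fun L => L e) (hslice.unique (hasFDerivAt_const 0 x))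

end Directional

section Spacetime

variable {f g : ℝ × (Fin 3 → ℝ) → ℝ}

theorem differentiable_ps (hf : ContDiff ℝ 2 f) (i : Fin 3) : Differentiable ℝ (ps i f) :=
  differentiable_fderiv_apply hf _

theorem ps_neg (i : Fin 3) (p : ℝ × (Fin 3 → ℝ)) : ps i (fun y => -f y) p = -ps i f p := by
  simp only [ps, fderiv_fun_neg, neg_apply]

theorem ps_add {p : ℝ × (Fin 3 → ℝ)} (hf : DifferentiableAt ℝ f p) (hg : DifferentiableAt ℝ g p)
    (i : Fin 3) : ps i (fun y => f y + g y) p = ps i f p + ps i g p := by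
  simp only [ps, fderiv_fun_add hf hg, add_apply]

theorem pt_ps_comm (hf : ContDiff ℝ 2 f) (i : Fin 3) (p : ℝ × (Fin 3 → ℝ)) :
    pt (ps i f) p = ps i (pt f) p :=
  fderiv_fderiv_apply_comm hf.contDiffAt _ _

theorem ps_ps_comm (hf : ContDiff ℝ 2 f) (i j : Fin 3) (p : ℝ × (Fin 3 → ℝ)) :
    ps i (ps j f) p = ps j (ps i f) p :=
  fderiv_fderiv_apply_comm hf.contDiffAt _ _

theorem ps_eq_zero_of_forall_eq_zero {t : ℝ} {x : Fin 3 → ℝ} (hg : DifferentiableAt ℝ g (t, x))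
    (h0 : ∀ y, g (t, y) = 0) (i : Fin 3) : ps i g (t, x) = 0 :=
  fderiv_apply_inr_eq_zero_of_forall_eq_zero hg h0 _

end Spacetime

section Involution

variable {J : ℝ × (Fin 3 → ℝ) → Fin 3 → ℝ} {m k : Fin 3}

theorem differentiable_Invol (hm : ContDiff ℝ 2 fun y => J y m)
    (hk : ContDiff ℝ 2 fun y => J y k) : Differentiable ℝ (Invol J m k) :=
  (differentiable_ps hk m).sub (differentiable_ps hm k)

theorem pt_Invol (hm : ContDiff ℝ 2 fun y => J y m) (hk : ContDiff ℝ 2 fun y => J y k)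
    (p : ℝ × (Fin 3 → ℝ)) :
    pt (Invol J m k) p = ps m (pt fun y => J y k) p - ps k (pt fun y => J y m) p := by
  rw [← pt_ps_comm hk, ← pt_ps_comm hm]
  exact congrArg (· (1, 0)) (fderiv_fun_sub (differentiable_ps hk m p) (differentiable_ps hm k p))

end Involution

theorem curl_involution_stationary
    (v J : ℝ × (Fin 3 → ℝ) → Fin 3 → ℝ)
    (hv : ∀ k, ContDiff ℝ 2 (fun x => v x k))
    (hJ : ∀ k, ContDiff ℝ 2 (fun x => J x k))
    (pde : ∀ (x : ℝ × (Fin 3 → ℝ)) (k : Fin 3),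
      pt (fun y => J y k) x
        + ps k (fun y => ∑ m, v y m * J y m) x
        + ∑ m, v x m * (ps m (fun y => J y k) x - ps k (fun y => J y m) x) = 0)
    (t : ℝ)
    (hcurl : ∀ (m k : Fin 3) (x : Fin 3 → ℝ), Invol J m k (t, x) = 0) :
    ∀ (m k : Fin 3) (x : Fin 3 → ℝ), pt (Invol J m k) (t, x) = 0 := by
  intro m k x
  set S := fun y => ∑ n, v y n * J y n
  have hS : ContDiff ℝ 2 S := ContDiff.sum fun n _ => (hv n).mul (hJ n)
  have hpt_J : ∀ j, (pt fun y => J y j) = fun y => -(ps j S y + ∑ n, v y n * Invol J n j y) :=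
    fun j => funext fun y => eq_neg_of_add_eq_zero_left ((add_assoc _ _ _).symm.trans (pde y j))
  have hps_pt_J : ∀ i j, ps i (pt fun y => J y j) (t, x) = -ps i (ps j S) (t, x) := by
    intro i j
    have hT : Differentiable ℝ fun y => ∑ n, v y n * Invol J n j y :=
      Differentiable.fun_sum fun n _ =>
        ((hv n).differentiable two_ne_zero).mul (differentiable_Invol (hJ n) (hJ j))
    have htransport : ps i (fun y => ∑ n, v y n * Invol J n j y) (t, x) = 0 :=
      ps_eq_zero_of_forall_eq_zero (hT _) (fun y => by simp [hcurl]) i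
    rw [hpt_J j, ps_neg, ps_add (differentiable_ps hS j _) (hT _), htransport, add_zero]
  rw [pt_Invol (hJ m) (hJ k), hps_pt_J, hps_pt_J, ps_ps_comm hS]
  ring
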